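/- Let A₀, A₁, A₂ ∈ ℝ^{n×n} and Ω be a positive diagonal matrix such that σ_min(2ΩA₀ + A₁ + A₂) > 2‖A₁ − A₂‖ + ‖2ΩA₀ − A₁ − A₂‖. Then for all q₀, q₁, q₂ ∈ ℝⁿ, the extended vertical linear complementarity problem min{A₀x + q₀, A₁x + q₁, A₂x + q₂} = 0 has a unique solution x ∈ ℝⁿ. -/

import Mathlib

noncomputable def mApp {n : ℕ} (B : Matrix (Fin n) (Fin n) ℝ) (x : EuclideanSpace ℝ (Fin n)) :
    EuclideanSpace ℝ (Fin n) := Matrix.toEuclideanCLM (𝕜 := ℝ) B x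

noncomputable def specNorm {n : ℕ} (B : Matrix (Fin n) (Fin n) ℝ) : ℝ :=
  ‖Matrix.toEuclideanCLM (𝕜 := ℝ) B‖

noncomputable def sigmaMin {n : ℕ} (B : Matrix (Fin n) (Fin n) ℝ) : ℝ :=
  sInf {r : ℝ | ∃ v : EuclideanSpace ℝ (Fin n), ‖v‖ = 1 ∧ r = ‖mApp B v‖}

def vabs {n : ℕ} (v : EuclideanSpace ℝ (Fin n)) : EuclideanSpace ℝ (Fin n) := WithLp.toLp 2 (fun i => |v i|)

/-!
Put `M = 2ΩA₀ + A₁ + A₂`. Substituting `|b - c| = b + c - 2 min b c`, the `i`-th row of the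
generalized absolute value equation `M x = G x` reads `s + t = |s - t|` with `s = 2ωᵢaᵢ` and
`t = 2 min bᵢ cᵢ`; this says `min s t = 0`, which, as `ωᵢ > 0`, is the `i`-th EVLCP condition.
As `|·|` is `1`-Lipschitz, `G` is Lipschitz with constant `2‖A₁ - A₂‖ + ‖2ΩA₀ - A₁ - A₂‖`, which is
smaller than `σ_min(M)`, the factor by which `M` at least expands distances. Hence `M⁻¹ ∘ G` is a
contraction, and Banach's fixed-point theorem gives exactly one solution.
-/

open scoped NNReal
open Function

theorem min_eq_zero_iff_add_eq_abs_sub {x y : ℝ} : min x y = 0 ↔ x + y = |x - y| := by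
  rcases le_total x y with h | h
  · rw [min_eq_left h, abs_of_nonpos (sub_nonpos.2 h)]
    constructor <;> intro <;> linarith
  · rw [min_eq_right h, abs_of_nonneg (sub_nonneg.2 h)]
    constructor <;> intro <;> linarith

theorem min_mul_eq_zero_iff {ω : ℝ} (hω : 0 < ω) {x y : ℝ} :
    min (ω * x) y = 0 ↔ min x y = 0 := by
  rcases le_total x y with h | h <;> rcases le_total (ω * x) y with h' | h' <;>
    simp only [min_eq_left, min_eq_right, h, h'] <;> constructor <;> intro <;> nlinarith

theorem min_min_eq_zero_iff {ω : ℝ} (hω : 0 < ω) (a b c : ℝ) :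
    min a (min b c) = 0 ↔ 2 * ω * a + b + c = |b - c| + |(2 * ω * a - b - c + |b - c|)| := by
  have hbc : |b - c| = b + c - 2 * min b c := by
    rw [← max_sub_min_eq_abs']
    linarith [min_add_max b c]
  rw [← min_mul_eq_zero_iff hω, ← mul_right_inj' (two_ne_zero (α := ℝ)), mul_zero,
    mul_min_of_nonneg _ _ zero_le_two, min_eq_zero_iff_add_eq_abs_sub, hbc,
    show 2 * ω * a - b - c + (b + c - 2 * min b c) = 2 * (ω * a) - 2 * min b c by ring]
  constructor <;> intro h <;> linarith

theorem existsUnique_eq_of_antilipschitzWith_of_lipschitzWith {X : Type*} [MetricSpace X]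
    [CompleteSpace X] [Nonempty X] {T G : X → X} {K L : ℝ≥0} (hTsurj : Surjective T)
    (hT : AntilipschitzWith K T) (hG : LipschitzWith L G) (hKL : K * L < 1) :
    ∃! x, T x = G x := by
  obtain ⟨g, hg⟩ := hTsurj.hasRightInverse
  have hF : ContractingWith (K * L) (g ∘ G) := ⟨hKL, (hT.to_rightInverse hg).comp hG⟩
  have hfix : ∀ x, T x = G x ↔ IsFixedPt (g ∘ G) x := fun x =>
    ⟨fun h => hT.injective (by rw [comp_apply, hg, h]), fun h => (congrArg T h.symm).trans (hg _)⟩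
  exact ⟨_, (hfix _).2 hF.fixedPoint_isFixedPt, fun y hy => hF.fixedPoint_unique ((hfix y).1 hy)⟩

section

variable {n : ℕ}

theorem vabs_apply (v : EuclideanSpace ℝ (Fin n)) (i : Fin n) : vabs v i = |v i| := rfl

theorem lipschitzWith_vabs : LipschitzWith 1 (vabs : EuclideanSpace ℝ (Fin n) → _) := by
  refine LipschitzWith.mk_one fun x y => ?_
  simp only [EuclideanSpace.dist_eq, Real.dist_eq, vabs]
  refine Real.sqrt_le_sqrt (Finset.sum_le_sum fun i _ => ?_)
  exact pow_le_pow_left₀ (abs_nonneg _) (abs_abs_sub_abs_le_abs_sub (x i) (y i)) 2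

theorem mApp_apply_of_isDiag {Ω : Matrix (Fin n) (Fin n) ℝ} (hΩ : Ω.IsDiag)
    (y : EuclideanSpace ℝ (Fin n)) (i : Fin n) : mApp Ω y i = Ω i i * y i := by
  conv_lhs => rw [mApp, ← hΩ.diagonal_diag, ← WithLp.toLp_ofLp 2 y, Matrix.toEuclideanCLM_toLp]
  exact Matrix.mulVec_diagonal _ _ i

theorem lipschitzWith_mApp (B : Matrix (Fin n) (Fin n) ℝ) :
    LipschitzWith ‖Matrix.toEuclideanCLM (𝕜 := ℝ) B‖₊ (mApp B) :=
  (Matrix.toEuclideanCLM (𝕜 := ℝ) B).lipschitz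

theorem sigmaMin_mul_norm_le (M : Matrix (Fin n) (Fin n) ℝ) (x : EuclideanSpace ℝ (Fin n)) :
    sigmaMin M * ‖x‖ ≤ ‖mApp M x‖ := by
  rcases eq_or_ne x 0 with rfl | hx
  · simp [mApp]
  have hx' : 0 < ‖x‖ := norm_pos_iff.2 hx
  have hle : sigmaMin M ≤ ‖mApp M (‖x‖⁻¹ • x)‖ :=
    csInf_le ⟨0, fun r ⟨_, _, hr⟩ => hr ▸ norm_nonneg _⟩ ⟨_, by simp [norm_smul, hx'.ne'], rfl⟩
  rwa [mApp, map_smul, norm_smul, norm_inv, norm_norm, inv_mul_eq_div, le_div_iff₀ hx'] at hle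

theorem antilipschitzWith_mApp {M : Matrix (Fin n) (Fin n) ℝ} (hM : 0 < sigmaMin M) :
    AntilipschitzWith (sigmaMin M).toNNReal⁻¹ (mApp M) :=
  ContinuousLinearMap.antilipschitz_of_bound _ fun x => by
    rw [NNReal.coe_inv, Real.coe_toNNReal _ hM.le, inv_mul_eq_div, le_div_iff₀ hM, mul_comm]
    exact sigmaMin_mul_norm_le M x

theorem surjective_mApp_of_injective {M : Matrix (Fin n) (Fin n) ℝ} (hM : Injective (mApp M)) :
    Surjective (mApp M) :=
  LinearMap.injective_iff_surjective (f := (Matrix.toEuclideanCLM (𝕜 := ℝ) M).toLinearMap).1 hM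

theorem forall_min_min_eq_zero_iff {Ω : Matrix (Fin n) (Fin n) ℝ} (hΩ : Ω.IsDiag)
    (hpos : ∀ i, 0 < Ω i i) (a b c : EuclideanSpace ℝ (Fin n)) :
    (∀ i, min (a i) (min (b i) (c i)) = 0) ↔
      (2 : ℝ) • mApp Ω a + b + c =
        vabs (b - c) + vabs ((2 : ℝ) • mApp Ω a - b - c + vabs (b - c)) := by
  simp only [PiLp.ext_iff, PiLp.add_apply, PiLp.sub_apply, PiLp.smul_apply, smul_eq_mul,
    vabs_apply, mApp_apply_of_isDiag hΩ, ← mul_assoc]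
  exact forall_congr' fun i => min_min_eq_zero_iff (hpos i) _ _ _

variable (Ω A₀ A₁ A₂ : Matrix (Fin n) (Fin n) ℝ) (q₀ q₁ q₂ : EuclideanSpace ℝ (Fin n))

noncomputable def gaveRhs (x : EuclideanSpace ℝ (Fin n)) : EuclideanSpace ℝ (Fin n) :=
  vabs (mApp (A₁ - A₂) x + (q₁ - q₂)) +
    vabs (mApp ((2 : ℝ) • (Ω * A₀) - A₁ - A₂) x + vabs (mApp (A₁ - A₂) x + (q₁ - q₂)) +
      ((2 : ℝ) • mApp Ω q₀ - q₁ - q₂)) -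
    ((2 : ℝ) • mApp Ω q₀ + q₁ + q₂)

theorem lipschitzWith_gaveRhs :
    LipschitzWith (2 * ‖Matrix.toEuclideanCLM (𝕜 := ℝ) (A₁ - A₂)‖₊ +
      ‖Matrix.toEuclideanCLM (𝕜 := ℝ) ((2 : ℝ) • (Ω * A₀) - A₁ - A₂)‖₊)
      (gaveRhs Ω A₀ A₁ A₂ q₀ q₁ q₂) := by
  have hu := lipschitzWith_vabs.comp
    ((lipschitzWith_mApp (A₁ - A₂)).add (LipschitzWith.const (q₁ - q₂)))
  have hw := lipschitzWith_vabs.comp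
    (((lipschitzWith_mApp ((2 : ℝ) • (Ω * A₀) - A₁ - A₂)).add hu).add
      (LipschitzWith.const ((2 : ℝ) • mApp Ω q₀ - q₁ - q₂)))
  refine ((hu.add hw).sub (LipschitzWith.const _)).weaken (le_of_eq ?_)
  ring

theorem evlcp_iff_eq_gaveRhs (hΩ : Ω.IsDiag) (hpos : ∀ i, 0 < Ω i i)
    (x : EuclideanSpace ℝ (Fin n)) :
    (∀ i, min ((mApp A₀ x + q₀) i) (min ((mApp A₁ x + q₁) i) ((mApp A₂ x + q₂) i)) = 0) ↔
      mApp ((2 : ℝ) • (Ω * A₀) + A₁ + A₂) x = gaveRhs Ω A₀ A₁ A₂ q₀ q₁ q₂ x := by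
  have hu : mApp (A₁ - A₂) x + (q₁ - q₂) = (mApp A₁ x + q₁) - (mApp A₂ x + q₂) := by
    simp only [mApp, map_sub, sub_apply]
    abel
  have hw : mApp ((2 : ℝ) • (Ω * A₀) - A₁ - A₂) x + ((2 : ℝ) • mApp Ω q₀ - q₁ - q₂) =
      (2 : ℝ) • mApp Ω (mApp A₀ x + q₀) - (mApp A₁ x + q₁) - (mApp A₂ x + q₂) := by
    simp only [mApp, map_sub, map_add, map_smul, map_mul, sub_apply, smul_apply, mul_apply_eq_comp]
    module
  have hM : mApp ((2 : ℝ) • (Ω * A₀) + A₁ + A₂) x =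
      (2 : ℝ) • mApp Ω (mApp A₀ x + q₀) + (mApp A₁ x + q₁) + (mApp A₂ x + q₂) -
        ((2 : ℝ) • mApp Ω q₀ + q₁ + q₂) := by
    simp only [mApp, map_add, map_smul, map_mul, add_apply, smul_apply, mul_apply_eq_comp]
    module
  rw [gaveRhs, hu, add_right_comm (mApp _ x), hw, hM, sub_left_inj,
    forall_min_min_eq_zero_iff hΩ hpos]

end

theorem stmt_13 {n : ℕ} (Ω A₀ A₁ A₂ : Matrix (Fin n) (Fin n) ℝ)
    (hdiag : Ω.IsDiag) (hpos : ∀ i, 0 < Ω i i)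
    (hσ : sigmaMin ((2 : ℝ) • (Ω * A₀) + A₁ + A₂) >
        2 * specNorm (A₁ - A₂) + specNorm ((2 : ℝ) • (Ω * A₀) - A₁ - A₂)) :
    ∀ q₀ q₁ q₂ : EuclideanSpace ℝ (Fin n), ∃! x : EuclideanSpace ℝ (Fin n),
      ∀ i, min ((mApp A₀ x + q₀) i)
          (min ((mApp A₁ x + q₁) i) ((mApp A₂ x + q₂) i)) = 0 := by
  intro q₀ q₁ q₂
  have hσ_pos : 0 < sigmaMin ((2 : ℝ) • (Ω * A₀) + A₁ + A₂) :=
    lt_of_le_of_lt (by unfold specNorm; positivity) hσ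
  have hM := antilipschitzWith_mApp hσ_pos
  simp_rw [evlcp_iff_eq_gaveRhs Ω A₀ A₁ A₂ q₀ q₁ q₂ hdiag hpos]
  refine existsUnique_eq_of_antilipschitzWith_of_lipschitzWith
    (surjective_mApp_of_injective hM.injective) hM (lipschitzWith_gaveRhs Ω A₀ A₁ A₂ q₀ q₁ q₂) ?_
  rw [← NNReal.coe_lt_coe, NNReal.coe_mul, NNReal.coe_inv, Real.coe_toNNReal _ hσ_pos.le,
    NNReal.coe_one, inv_mul_lt_one₀ hσ_pos]
  simpa [specNorm] using hσ
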